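/- arXiv:1710.03507 — 6 statements merged into one kernel-verified Lean document; each statement's English description precedes it below -/
import Mathlib

section
/- Let Λ be a ℤ-lattice with unimodular bilinear form L, monodromy M_h defined by L(M_h a, b) = -L(b, a), and let V ⊂ Λ ⊗ ℂ be a monodromy-invariant subspace not containing the eigenvalue 1. Then the hermitian form h := ⊕_λ h_λ (with h_λ(a,b) = √(-λ)·L(a, b̄)) is positive definite on V if and only if the hermitian form (a, b) ↦ L(a, b̄) + L(b̄, a) is positive definite on V. -/
/-!
On an eigenvector `a` of `M` with eigenvalue `λ`, the relation `L (M a) b = - L b a` gives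
`L a ā + L ā a = (1 - λ) L a ā`. Since `λ` is a root of unity, `s = √(-λ)` lies on the unit
circle and `1 - λ = 2 Re(s) · s` with `Re s > 0` as soon as `λ ≠ 1`; so both forms have positive
real part on the same eigenvectors. In general, split `a ∈ W` into its eigencomponents by the
discrete Fourier projections `(1/n) ∑ⱼ μ⁻ʲ Mʲ`. The sesquilinear form `(x, y) ↦ L x ȳ + L ȳ x` is
`M`-invariant, so components with distinct eigenvalues are orthogonal for it, and its value at `a`
is the sum of its (nonnegative) values at the components, one of which is positive.
-/

open Complex Finset ComplexConjugate

theorem IsPrimitiveRoot.sum_pow_pow_eq_ite {K : Type*} [Field K] {ζ : K} {n j : ℕ}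
    (hζ : IsPrimitiveRoot ζ n) (hj : j < n) :
    ∑ k ∈ range n, (ζ ^ k) ^ j = if j = 0 then (n : K) else 0 := by
  split_ifs with hj0
  · simp [hj0]
  · have hne : ζ ^ j ≠ 1 := hζ.pow_ne_one_of_pos_of_lt hj0 hj
    simp_rw [← pow_mul, mul_comm _ j, pow_mul]
    rw [geom_sum_eq hne, ← pow_mul, mul_comm, pow_mul, hζ.pow_eq_one, one_pow, sub_self,
      zero_div]

theorem Module.End.pow_eq_one_of_apply_eq_smul {K V : Type*} [Field K] [AddCommGroup V]
    [Module K V] {M : Module.End K V} {n : ℕ} (hMn : M ^ n = 1) {lam : K} {a : V}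
    (ha : M a = lam • a) (ha0 : a ≠ 0) : lam ^ n = 1 := by
  have hv : M.HasEigenvector lam a := ⟨Module.End.mem_eigenspace_iff.mpr ha, ha0⟩
  have := hv.pow_apply n
  rw [hMn, Module.End.one_apply] at this
  exact smul_left_injective K ha0 (show lam ^ n • a = (1 : K) • a by rw [← this, one_smul])

section EigenComponent

variable {K V : Type*} [Field K] [AddCommGroup V] [Module K V]

def eigenComponent (M : Module.End K V) (n : ℕ) (μ : K) : Module.End K V :=
  (n : K)⁻¹ • ∑ j ∈ range n, (μ⁻¹ • M) ^ j

variable {M : Module.End K V} {n : ℕ}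

theorem apply_eigenComponent (hn : n ≠ 0) (hMn : M ^ n = 1) {μ : K} (hμ : μ ^ n = 1) (v : V) :
    M (eigenComponent M n μ v) = μ • eigenComponent M n μ v := by
  have hμ0 : μ ≠ 0 := by rintro rfl; simp [zero_pow hn] at hμ
  set S := ∑ j ∈ range n, (μ⁻¹ • M) ^ j
  have hgeom : (μ⁻¹ • M - 1) * S = 0 := by
    rw [mul_geom_sum, smul_pow, hMn, inv_pow, hμ, inv_one, one_smul, sub_self]
  have hS : μ⁻¹ • M (S v) = S v := by
    simpa [sub_eq_zero] using LinearMap.congr_fun hgeom v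
  have hMS : M (S v) = μ • S v := (inv_smul_eq_iff₀ hμ0).mp hS
  rw [eigenComponent, LinearMap.smul_apply, map_smul, hMS, smul_comm]

theorem eigenComponent_mem {W : Submodule K V} (hW : ∀ v ∈ W, M v ∈ W) (μ : K) {v : V}
    (hv : v ∈ W) : eigenComponent M n μ v ∈ W := by
  simp only [eigenComponent, LinearMap.smul_apply, LinearMap.sum_apply, smul_pow]
  exact W.smul_mem _ <| W.sum_mem fun j _ ↦
    W.smul_mem _ (Module.End.pow_apply_mem_of_forall_mem j hW v hv)

theorem sum_eigenComponent {ζ : K} (hζ : IsPrimitiveRoot ζ n) (hn : (n : K) ≠ 0) :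
    ∑ k ∈ range n, eigenComponent M n (ζ ^ k) = 1 := by
  have hcoeff : ∀ j ∈ range n, ∑ k ∈ range n, ((ζ ^ k)⁻¹) ^ j = if j = 0 then (n : K) else 0 :=
    fun j hj ↦ by simpa only [← inv_pow] using hζ.inv.sum_pow_pow_eq_ite (mem_range.mp hj)
  have hn0 : 0 ∈ range n := mem_range.mpr (Nat.pos_of_ne_zero (by rintro rfl; simp at hn))
  simp only [eigenComponent, smul_pow, ← smul_sum]
  rw [sum_comm]
  simp only [← sum_smul]
  rw [sum_congr rfl fun j hj ↦ by rw [hcoeff j hj], sum_eq_single_of_mem 0 hn0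
    fun j _ hj ↦ by rw [if_neg hj, zero_smul]]
  simp [hn]

theorem sum_eigenComponent_apply {ζ : K} (hζ : IsPrimitiveRoot ζ n) (hn : (n : K) ≠ 0)
    (v : V) : ∑ k ∈ range n, eigenComponent M n (ζ ^ k) v = v := by
  simpa using LinearMap.congr_fun (sum_eigenComponent (M := M) hζ hn) v

theorem apply_eigenComponent_pow {ζ : K} (hζ : IsPrimitiveRoot ζ n) (hn : n ≠ 0)
    (hMn : M ^ n = 1) (k : ℕ) (v : V) :
    M (eigenComponent M n (ζ ^ k) v) = ζ ^ k • eigenComponent M n (ζ ^ k) v :=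
  apply_eigenComponent hn hMn (by rw [pow_right_comm, hζ.pow_eq_one, one_pow]) v

end EigenComponent

theorem one_sub_eq_two_re_mul_cpow_half {lam : ℂ} (hlam : ‖lam‖ = 1) :
    1 - lam = 2 * ((-lam) ^ ((1 : ℂ) / 2)).re * (-lam) ^ ((1 : ℂ) / 2) := by
  set s := (-lam) ^ ((1 : ℂ) / 2)
  have hsq : s ^ 2 = -lam := by
    simp only [s, one_div, cpow_ofNat_inv_pow]
  -- `‖s‖ = 1` turns `1 - lam = 1 + s ^ 2` into `s * conj s + s ^ 2 = (s + conj s) * s`.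
  have hconj : s * conj s = 1 := by
    rw [mul_conj', ← ofReal_pow, ← norm_pow, hsq, norm_neg, hlam, ofReal_one]
  have hre : (2 * s.re : ℂ) = s + conj s := by rw [add_conj]; push_cast; ring
  rw [hre]
  linear_combination -hconj - hsq

theorem re_neg_cpow_half_pos {lam : ℂ} (hlam : ‖lam‖ = 1) (h1 : lam ≠ 1) :
    0 < ((-lam) ^ ((1 : ℂ) / 2)).re := by
  have hnonneg : 0 ≤ ((-lam) ^ ((1 : ℂ) / 2)).re := by
    rw [one_div, cpow_inv_two_re]; positivity
  refine hnonneg.lt_of_ne fun h ↦ h1 ?_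
  have := one_sub_eq_two_re_mul_cpow_half hlam
  rw [← h, ofReal_zero, mul_zero, zero_mul, sub_eq_zero] at this
  exact this.symm

theorem add_flip_eq_one_sub_mul {K V : Type*} [CommRing K] [AddCommGroup V] [Module K V]
    {L : V →ₗ[K] V →ₗ[K] K} {M : Module.End K V} (hM : ∀ a b, L (M a) b = -L b a)
    {lam : K} {a : V} (ha : M a = lam • a) (b : V) : L a b + L b a = (1 - lam) * L a b := by
  have h := hM a b
  rw [ha, map_smul, LinearMap.smul_apply, smul_eq_mul] at h
  linear_combination h

theorem re_add_flip_pos_iff {V : Type*} [AddCommGroup V] [Module ℂ V]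
    {L : V →ₗ[ℂ] V →ₗ[ℂ] ℂ} {M : Module.End ℂ V} (hM : ∀ a b, L (M a) b = -L b a)
    {lam : ℂ} {a : V} (ha : M a = lam • a) (hlam : ‖lam‖ = 1) (h1 : lam ≠ 1) (b : V) :
    0 < (L a b + L b a).re ↔ 0 < ((-lam) ^ ((1 : ℂ) / 2) * L a b).re := by
  set s := (-lam) ^ ((1 : ℂ) / 2)
  have h : L a b + L b a = ((2 * s.re : ℝ) : ℂ) * (s * L a b) := by
    rw [add_flip_eq_one_sub_mul hM ha, one_sub_eq_two_re_mul_cpow_half hlam]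
    push_cast; ring
  rw [h, re_ofReal_mul]
  exact mul_pos_iff_of_pos_left (by linarith [re_neg_cpow_half_pos hlam h1])

section Sesquilinear

variable {V : Type*} [AddCommGroup V] [Module ℂ V] {B : V →ₗ[ℂ] V →ₗ⋆[ℂ] ℂ}
  {M : Module.End ℂ V} {n : ℕ}

theorem apply_eq_zero_of_eigenvalue_ne (hB : ∀ x y, B (M x) (M y) = B x y) {x y : V}
    {α β : ℂ} (hx : M x = α • x) (hy : M y = β • y) (hβ : ‖β‖ = 1) (hαβ : α ≠ β) :
    B x y = 0 := by
  have hβ0 : β ≠ 0 := norm_ne_zero_iff.mp (by rw [hβ]; exact one_ne_zero)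
  have h : B x y = α * conj β * B x y := by
    conv_lhs => rw [← hB, hx, hy, LinearMap.map_smul₂, LinearMap.map_smulₛₗ]
    rw [smul_eq_mul, smul_eq_mul]
    ring
  have hne : α * conj β ≠ 1 := by
    rw [← inv_eq_conj hβ, Ne, mul_inv_eq_one₀ hβ0]
    exact hαβ
  by_contra h0
  exact hne (mul_right_cancel₀ h0 (by linear_combination -h))

theorem apply_self_eq_sum_eigenComponent (hB : ∀ x y, B (M x) (M y) = B x y) {ζ : ℂ}
    (hζ : IsPrimitiveRoot ζ n) (hn : n ≠ 0) (hMn : M ^ n = 1) (a : V) :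
    B a a = ∑ k ∈ range n, B (eigenComponent M n (ζ ^ k) a) (eigenComponent M n (ζ ^ k) a) := by
  have hnorm : ∀ k, ‖ζ ^ k‖ = 1 := fun k ↦ by
    rw [norm_pow, norm_eq_one_of_pow_eq_one hζ.pow_eq_one hn, one_pow]
  conv_lhs => rw [← sum_eigenComponent_apply (M := M) hζ (Nat.cast_ne_zero.mpr hn) a]
  rw [LinearMap.map_sum₂]
  refine sum_congr rfl fun k hk ↦ ?_
  rw [map_sum, sum_eq_single_of_mem k hk fun j hj hjk ↦ apply_eq_zero_of_eigenvalue_ne hB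
    (apply_eigenComponent_pow hζ hn hMn k a) (apply_eigenComponent_pow hζ hn hMn j a) (hnorm j)
    fun h ↦ hjk (hζ.pow_inj (mem_range.mp hj) (mem_range.mp hk) h.symm)]

theorem re_apply_self_pos_of_eigenvectors (hB : ∀ x y, B (M x) (M y) = B x y) (hn : n ≠ 0)
    (hMn : M ^ n = 1) {W : Submodule ℂ V} (hWM : ∀ v ∈ W, M v ∈ W)
    (hpos : ∀ (μ : ℂ) (u : V), u ∈ W → M u = μ • u → u ≠ 0 → 0 < (B u u).re)
    {a : V} (haW : a ∈ W) (ha0 : a ≠ 0) : 0 < (B a a).re := by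
  obtain ⟨ζ, hζ⟩ : ∃ ζ : ℂ, IsPrimitiveRoot ζ n := ⟨_, isPrimitiveRoot_exp n hn⟩
  set u := fun k ↦ eigenComponent M n (ζ ^ k) a
  have huW : ∀ k, u k ∈ W := fun k ↦ eigenComponent_mem hWM _ haW
  have hu : ∀ k, M (u k) = ζ ^ k • u k := fun k ↦ apply_eigenComponent_pow hζ hn hMn k a
  rw [apply_self_eq_sum_eigenComponent hB hζ hn hMn a, re_sum]
  have hnonneg : ∀ k ∈ range n, 0 ≤ (B (u k) (u k)).re := fun k _ ↦ by
    rcases eq_or_ne (u k) 0 with h | h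
    · simp [h]
    · exact (hpos _ _ (huW k) (hu k) h).le
  obtain ⟨k, hk, hk0⟩ : ∃ k ∈ range n, u k ≠ 0 := by
    by_contra! h
    rw [← sum_eigenComponent_apply (M := M) hζ (Nat.cast_ne_zero.mpr hn) a] at ha0
    exact ha0 (sum_eq_zero h)
  exact sum_pos' hnonneg ⟨k, hk, hpos _ _ (huW k) (hu k) hk0⟩

end Sesquilinear

theorem stmt_2_general (V : Type*) [AddCommGroup V] [Module ℂ V]
    (L : V →ₗ[ℂ] V →ₗ[ℂ] ℂ)
    (σ : V →+ V)
    (hσsmul : ∀ (c : ℂ) (v : V), σ (c • v) = (starRingEnd ℂ) c • σ v)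
    (M : Module.End ℂ V)
    (hM : ∀ a b : V, L (M a) b = - L b a)
    (hMσ : ∀ v, M (σ v) = σ (M v))
    (n : ℕ) (hn : 0 < n) (hMn : M ^ n = 1)
    (W : Submodule ℂ V)
    (hWM : ∀ v ∈ W, M v ∈ W)
    (hW1 : ∀ v ∈ W, M v = v → v = 0) :
    (∀ (lam : ℂ) (a : V), a ∈ W → M a = lam • a → a ≠ 0 →
        0 < ((-lam) ^ ((1 : ℂ) / 2) * L a (σ a)).re)
      ↔ ∀ a ∈ W, a ≠ 0 → 0 < (L a (σ a) + L (σ a) a).re := by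
  have hML : ∀ a b, L (M a) (M b) = L a b := fun a b ↦ by rw [hM, hM, neg_neg]
  let σₗ : V →ₗ⋆[ℂ] V := { σ with map_smul' := hσsmul }
  let B : V →ₗ[ℂ] V →ₗ⋆[ℂ] ℂ := (L + L.flip).compl₂ σₗ
  have hB_apply : ∀ x y, B x y = L x (σ y) + L (σ y) x := fun _ _ ↦ rfl
  have hB : ∀ x y, B (M x) (M y) = B x y := fun x y ↦ by
    rw [hB_apply, hB_apply, ← hMσ, hML, hML]
  have hequiv : ∀ (lam : ℂ) (a : V), a ∈ W → M a = lam • a → a ≠ 0 →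
      (0 < (L a (σ a) + L (σ a) a).re ↔ 0 < ((-lam) ^ ((1 : ℂ) / 2) * L a (σ a)).re) :=
    fun lam a haW ha ha0 ↦ re_add_flip_pos_iff hM ha
      (norm_eq_one_of_pow_eq_one (M.pow_eq_one_of_apply_eq_smul hMn ha ha0) hn.ne')
      (fun h ↦ ha0 (hW1 a haW (by rw [ha, h, one_smul]))) (σ a)
  constructor
  · intro hpos a haW ha0
    exact re_apply_self_pos_of_eigenvectors hB hn.ne' hMn hWM
      (fun μ u huW hu hu0 ↦ (hequiv μ u huW hu hu0).mpr (hpos μ u huW hu hu0)) haW ha0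
  · intro hpos lam a haW ha ha0
    exact (hequiv lam a haW ha ha0).mp (hpos a haW ha0)

/-- For a monodromy-invariant subspace `W` not containing the eigenvalue 1,
the hermitian form `h = ⊕ h_lam` is positive definite on `W` if and only if the hermitian
form `(a, b) ↦ L(a, b̄) + L(b̄, a)` is positive definite on `W`. -/
theorem stmt_2 (V : Type*) [AddCommGroup V] [Module ℂ V]
    (L : V →ₗ[ℂ] V →ₗ[ℂ] ℂ)
    (σ : V →+ V)
    (hσinv : ∀ v, σ (σ v) = v)
    (hσsmul : ∀ (c : ℂ) (v : V), σ (c • v) = (starRingEnd ℂ) c • σ v)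
    (hLσ : ∀ a b : V, L (σ a) (σ b) = (starRingEnd ℂ) (L a b))
    (M : Module.End ℂ V)
    (hM : ∀ a b : V, L (M a) b = - L b a)
    (hMσ : ∀ v, M (σ v) = σ (M v))
    (n : ℕ) (hn : 0 < n) (hMn : M ^ n = 1)
    (W : Submodule ℂ V)
    (hWM : ∀ v ∈ W, M v ∈ W)
    (hW1 : ∀ v ∈ W, M v = v → v = 0) :
    (∀ (lam : ℂ) (a : V), a ∈ W → M a = lam • a → a ≠ 0 →
        0 < ((-lam) ^ ((1 : ℂ) / 2) * L a (σ a)).re)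
      ↔ ∀ a ∈ W, a ≠ 0 → 0 < (L a (σ a) + L (σ a) a).re :=
  stmt_2_general V L σ hσsmul M hM hMσ n hn hMn W hWM hW1
end

section
/- Let Λ be a ℤ-lattice with a finite-order automorphism M_h, and let Λ⁽¹⁾ ⊂ Λ be an M_h-invariant sublattice with index [Λ : Λ⁽¹⁾] = 2. Write the characteristic polynomial of M_h as p_Λ = p₁ · p₂ where p₁ is the product of those cyclotomic factors Φ_m with m not a power of 2 and p₂ is the product of those with m a power of 2. Then p₂ ≠ 1, and for every divisor p of p₁ one has Λ_{p,ℤ} = Λ⁽¹⁾_{p,ℤ} (where Λ_{p,ℤ} := (⊕_{λ: p(λ)=0} ker(M_h - λ)) ∩ Λ), while for every p with p₂ | p one has [Λ_{p,ℤ} : Λ⁽¹⁾_{p,ℤ}] = 2. -/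
/-!
Since `[Λ : Λ⁽¹⁾] = 2` and `M_h` preserves `Λ⁽¹⁾`, it acts trivially on `Λ / Λ⁽¹⁾ ≅ ℤ/2`, so
`q(M_h) x ≡ q(1) x` modulo `Λ⁽¹⁾` for every integer polynomial `q`. The value `Φ_m(1)` is odd
unless `m` is a power of `2`, so `p₁(1)` is odd and `p₁(M_h)` preserves both `Λ⁽¹⁾` and its
complement. By Cayley–Hamilton, `p₁(M_h)` maps an `x ∉ Λ⁽¹⁾` to an element of `Λ_{p,ℤ} \ Λ⁽¹⁾`
for every `p` divisible by `p₂`; in particular `p₂ ≠ 1`. Conversely, the kernel of `p(M_h)` for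
`p ∣ p₁` lies in `Λ⁽¹⁾`.
-/

open Polynomial

namespace AddSubgroup

section AddGroup

variable {G : Type*} [AddGroup G] {H : AddSubgroup G}

theorem apply_mem_iff_of_index_two (h : H.index = 2) {f : G →+ G}
    (hf : Function.Surjective f) (hfH : ∀ a ∈ H, f a ∈ H) {x : G} : f x ∈ H ↔ x ∈ H := by
  refine ⟨fun hfx => ?_, hfH x⟩
  by_contra hx
  have hall : ∀ y : G, y ∈ H := by
    intro y
    obtain ⟨z, rfl⟩ := hf y
    by_cases hz : z ∈ H
    · exact hfH z hz
    · have hzx : z + -x ∈ H := by simp [add_mem_iff_of_index_two h, hz, hx]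
      simpa [add_mem_iff_of_index_two h, hfx] using hfH _ hzx
  simp [(eq_top_iff' H).2 hall] at h

theorem apply_sub_mem_of_index_two (h : H.index = 2) {f : G →+ G}
    (hf : Function.Surjective f) (hfH : ∀ a ∈ H, f a ∈ H) (x : G) : f x - x ∈ H := by
  rw [sub_eq_add_neg, add_mem_iff_of_index_two h, neg_mem_iff,
    apply_mem_iff_of_index_two h hf hfH]

theorem zsmul_mem_iff_of_index_two_of_odd (h : H.index = 2) {c : ℤ} (hc : Odd c) {x : G} :
    c • x ∈ H ↔ x ∈ H := by
  obtain ⟨k, rfl⟩ := hc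
  have h2x : (2 : ℤ) • x ∈ H := by
    rw [two_zsmul, ← two_nsmul]
    exact two_smul_mem_of_index_two h x
  rw [add_zsmul, one_zsmul, mul_comm, mul_zsmul]
  exact add_mem_cancel_left (zsmul_mem h2x k)

end AddGroup

theorem relIndex_eq_two_of_index_two {G : Type*} [AddCommGroup G] {H K : AddSubgroup G}
    (h : H.index = 2) (hK : ¬ K ≤ H) : H.relIndex K = 2 := by
  have hdvd : H.relIndex K ∣ 2 := h ▸ relIndex_dvd_index_of_normal H K
  refine (Nat.prime_two.eq_one_or_self_of_dvd _ hdvd).resolve_left ?_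
  rwa [relIndex_eq_one]

end AddSubgroup

theorem Polynomial.aeval_apply_sub_eval_one_smul_mem {R M : Type*} [CommRing R]
    [AddCommGroup M] [Module R M] {f : Module.End R M} {N : Submodule R M}
    (hf : ∀ x, f x - x ∈ N) (q : R[X]) (x : M) : aeval f q x - q.eval 1 • x ∈ N := by
  obtain ⟨r, hr⟩ := X_sub_C_dvd_sub_C_eval (p := q) (a := 1)
  have key := congrArg (fun p => aeval f p x) hr
  simp only [map_sub, aeval_C, map_mul, aeval_X, map_one, LinearMap.sub_apply,
    Module.End.mul_apply, Module.End.one_apply, Module.algebraMap_end_apply] at key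
  rw [key]
  exact hf _

theorem Polynomial.aeval_apply_mem_iff_of_odd_eval_one {Λ : Type*} [AddCommGroup Λ]
    [Module ℤ Λ] {N : Submodule ℤ Λ} (hN : N.toAddSubgroup.index = 2) {f : Module.End ℤ Λ}
    (hf : ∀ x, f x - x ∈ N) {q : ℤ[X]} (hq : Odd (q.eval 1)) (x : Λ) :
    aeval f q x ∈ N ↔ x ∈ N := by
  have hcong : aeval f q x - q.eval 1 • x ∈ N := by
    -- here `aeval` uses `Ring.toIntAlgebra`, not `Module.End.instAlgebra`, and `•` is `zsmul`
    convert aeval_apply_sub_eval_one_smul_mem hf q x using 5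
    all_goals first
      | rfl
      | exact Subsingleton.elim (α := Algebra ℤ (Module.End ℤ Λ)) _ _
      | (ext c y; exact (int_smul_eq_zsmul _ c y).symm)
  have hodd := N.toAddSubgroup.zsmul_mem_iff_of_index_two_of_odd hN hq (x := x)
  rw [Submodule.mem_toAddSubgroup, Submodule.mem_toAddSubgroup] at hodd
  rw [← hodd]
  exact ⟨fun h => by simpa using N.sub_mem h hcong, fun h => by simpa using N.add_mem hcong h⟩

theorem Polynomial.odd_eval_one_cyclotomic {m : ℕ} (hm : ∀ k, m ≠ 2 ^ k) :
    Odd ((cyclotomic m ℤ).eval 1) := by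
  by_cases hpp : ∃ q k, q.Prime ∧ q ^ k = m
  · obtain ⟨q, k, hq, rfl⟩ := hpp
    have : Fact q.Prime := ⟨hq⟩
    have hq2 : q ≠ 2 := by rintro rfl; exact hm k rfl
    obtain _ | k := k
    · exact absurd (pow_zero 2) (hm 0)
    rw [eval_one_cyclotomic_prime_pow]
    exact_mod_cast hq.odd_of_ne_two hq2
  · rw [eval_one_cyclotomic_not_prime_pow fun hq k hk => hpp ⟨_, k, hq, hk⟩]
    exact odd_one

theorem Polynomial.odd_eval_one_prod_cyclotomic {J : Multiset ℕ}
    (hJ : ∀ m ∈ J, ∀ k, m ≠ 2 ^ k) : Odd ((J.map fun m => cyclotomic m ℤ).prod.eval 1) := by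
  refine Multiset.prod_induction (fun q : ℤ[X] => Odd (q.eval 1)) _
    (fun a b ha hb => by simpa only [eval_mul] using ha.mul hb) (by simp) ?_
  simp only [Multiset.mem_map]
  rintro _ ⟨m, hm, rfl⟩
  exact odd_eval_one_cyclotomic (hJ m hm)

theorem stmt_4_general (Λ : Type*) [AddCommGroup Λ] [Module ℤ Λ]
    [Module.Free ℤ Λ] [Module.Finite ℤ Λ]
    (M : Λ ≃ₗ[ℤ] Λ)
    (N : Submodule ℤ Λ) (hNM : ∀ a ∈ N, M a ∈ N)
    (hNindex : N.toAddSubgroup.index = 2)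
    (J₁ : Multiset ℕ)
    (hJ₁ : ∀ m ∈ J₁, 1 ≤ m ∧ ¬ ∃ k : ℕ, m = 2 ^ k)
    (p₁ p₂ : Polynomial ℤ)
    (hp₁ : p₁ = (J₁.map fun m => Polynomial.cyclotomic m ℤ).prod)
    (hchar : LinearMap.charpoly (M.toLinearMap : Module.End ℤ Λ) = p₁ * p₂) :
    p₂ ≠ 1 ∧
    (∀ p : Polynomial ℤ, p ∣ p₁ →
      LinearMap.ker (Polynomial.aeval (M.toLinearMap : Module.End ℤ Λ) p) ≤ N) ∧
    (∀ p : Polynomial ℤ, p₂ ∣ p →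
      AddSubgroup.relIndex N.toAddSubgroup
        (LinearMap.ker (Polynomial.aeval (M.toLinearMap : Module.End ℤ Λ) p)).toAddSubgroup
        = 2) := by
  have hM : ∀ x, M x - x ∈ N :=
    N.toAddSubgroup.apply_sub_mem_of_index_two hNindex (f := M.toAddMonoidHom) M.surjective hNM
  have hodd₁ : Odd (p₁.eval 1) := hp₁ ▸ odd_eval_one_prod_cyclotomic fun m hm k hk =>
    (hJ₁ m hm).2 ⟨k, hk⟩
  have hmem₁ := aeval_apply_mem_iff_of_odd_eval_one hNindex hM hodd₁
  have hcayley : aeval (M.toLinearMap : Module.End ℤ Λ) (p₁ * p₂) = 0 := by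
    rw [← hchar]
    convert LinearMap.aeval_self_charpoly (M : Module.End ℤ Λ) using 3
    all_goals first | rfl | exact Subsingleton.elim (α := Algebra ℤ (Module.End ℤ Λ)) _ _
  obtain ⟨x₀, hx₀⟩ : ∃ x₀, x₀ ∉ N := by
    by_contra! hall
    simp [(AddSubgroup.eq_top_iff' N.toAddSubgroup).2 hall] at hNindex
  refine ⟨?_, ?_, ?_⟩
  · rintro rfl
    rw [mul_one] at hcayley
    exact hx₀ ((hmem₁ x₀).1 (by simp [hcayley]))
  · rintro p ⟨q, rfl⟩ x hx
    rw [eval_mul] at hodd₁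
    exact (aeval_apply_mem_iff_of_odd_eval_one hNindex hM (Int.odd_mul.1 hodd₁).1 x).1
      (by simp [LinearMap.mem_ker.1 hx])
  · rintro _ ⟨q, rfl⟩
    refine AddSubgroup.relIndex_eq_two_of_index_two hNindex fun hle => hx₀ ((hmem₁ x₀).1 ?_)
    refine hle (LinearMap.mem_ker.2 ?_)
    rw [← Module.End.mul_apply, ← map_mul, show p₂ * q * p₁ = q * (p₁ * p₂) by ring, map_mul,
      hcayley, mul_zero, LinearMap.zero_apply]

/-- For an index-2 monodromy-invariant sublattice `N ⊂ Λ`, splitting the characteristic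
polynomial as `p₁ · p₂` (non-2-power cyclotomic factors times 2-power cyclotomic factors),
one has `p₂ ≠ 1`, `Λ_p = N_p` for `p ∣ p₁`, and `[Λ_p : N_p] = 2` whenever `p₂ ∣ p`. -/
theorem stmt_4 (Λ : Type*) [AddCommGroup Λ] [Module ℤ Λ]
    [Module.Free ℤ Λ] [Module.Finite ℤ Λ]
    (M : Λ ≃ₗ[ℤ] Λ) (n : ℕ) (hn : 0 < n) (hMn : M ^ n = 1)
    (N : Submodule ℤ Λ) (hNM : ∀ a ∈ N, M a ∈ N)
    (hNindex : N.toAddSubgroup.index = 2)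
    (J₁ J₂ : Multiset ℕ)
    (hJ₁ : ∀ m ∈ J₁, 1 ≤ m ∧ ¬ ∃ k : ℕ, m = 2 ^ k)
    (hJ₂ : ∀ m ∈ J₂, ∃ k : ℕ, m = 2 ^ k)
    (p₁ p₂ : Polynomial ℤ)
    (hp₁ : p₁ = (J₁.map fun m => Polynomial.cyclotomic m ℤ).prod)
    (hp₂ : p₂ = (J₂.map fun m => Polynomial.cyclotomic m ℤ).prod)
    (hchar : LinearMap.charpoly (M.toLinearMap : Module.End ℤ Λ) = p₁ * p₂) :
    p₂ ≠ 1 ∧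
    (∀ p : Polynomial ℤ, p ∣ p₁ →
      LinearMap.ker (Polynomial.aeval (M.toLinearMap : Module.End ℤ Λ) p) ≤ N) ∧
    (∀ p : Polynomial ℤ, p₂ ∣ p →
      AddSubgroup.relIndex N.toAddSubgroup
        (LinearMap.ker (Polynomial.aeval (M.toLinearMap : Module.End ℤ Λ) p)).toAddSubgroup
        = 2) :=
  stmt_4_general Λ M N hNM hNindex J₁ hJ₁ p₁ p₂ hp₁ hchar
end

section
/- Let Λ be a ℤ-lattice with finite-order automorphism M_h, and let Λ⁽¹⁾ ⊂ Λ be an Orlik block with cyclic generator e⁽¹⁾, i.e. Λ⁽¹⁾ = ⊕_{j=0}^{d-1} ℤ·M_h^j(e⁽¹⁾) where d = deg p_{Λ⁽¹⁾} and Λ⁽¹⁾ is primitive and M_h-invariant. If p_{Λ⁽¹⁾} = p₁·p₂ with deg p₁ ≥ 1 and deg p₂ ≥ 1, then the sublattice Λ⁽²⁾ := Λ⁽¹⁾ ∩ (⊕_{λ: p₁(λ)=0} ker(M_h - λ)) is also an Orlik block, with cyclic generator e⁽²⁾ := p₂(M_h)(e⁽¹⁾). -/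
/-!
Evaluating polynomials at `M` on the cyclic generator, `q ↦ q(M) e`, identifies `ℤ[X]/(p)` with
the block `N`: linear independence of `e, M e, …, M^(d-1) e` says that no nonzero polynomial of
degree `< d` kills `e`, so, `p` being monic, the annihilator of `e` is exactly `(p)`, and `N` is
the image of the polynomials of degree `< d`. For such a `q`, `p₁(M) (q(M) e) = 0` means
`p₁ p₂ ∣ p₁ q`, i.e. `q = p₂ s` with `deg s < deg p₁`; these are exactly the values of `s(M)` on
`p₂(M) e`, and the same degree count turns independence for `e` into independence for `p₂(M) e`.
Primitivity passes to `N ∩ ker p₁(M)` because a kernel in a torsion-free lattice is primitive.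
-/

open Polynomial Submodule Module.End

namespace Polynomial

variable {R : Type*} [CommRing R] [IsDomain R]

lemma mul_mem_degreeLT_natDegree_mul_iff {p₁ p₂ : R[X]} (hp₁ : p₁ ≠ 0) (hp₂ : p₂ ≠ 0)
    (s : R[X]) : p₂ * s ∈ degreeLT R (p₁ * p₂).natDegree ↔ s ∈ degreeLT R p₁.natDegree := by
  rcases eq_or_ne s 0 with rfl | hs
  · simp only [mul_zero, zero_mem]
  simp only [mem_degreeLT, degree_eq_natDegree (mul_ne_zero hp₂ hs), degree_eq_natDegree hs,
    natDegree_mul hp₂ hs, natDegree_mul hp₁ hp₂]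
  norm_cast
  omega

end Polynomial

namespace Submodule

variable {R M : Type*} [CommRing R] [AddCommGroup M] [Module R M]

def IsPrimitive (N : Submodule R M) : Prop :=
  ∀ (a : M) (c : R), c ≠ 0 → c • a ∈ N → a ∈ N

lemma IsPrimitive.inf {N N' : Submodule R M} (hN : N.IsPrimitive) (hN' : N'.IsPrimitive) :
    (N ⊓ N').IsPrimitive :=
  fun a c hc ha => ⟨hN a c hc ha.1, hN' a c hc ha.2⟩

lemma isPrimitive_ker [IsDomain R] {M' : Type*} [AddCommGroup M'] [Module R M']
    [Module.IsTorsionFree R M'] (g : M →ₗ[R] M') : (LinearMap.ker g).IsPrimitive := by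
  intro a c hc ha
  rw [LinearMap.mem_ker, map_smul, smul_eq_zero] at ha
  exact ha.resolve_left hc

lemma isPrimitive_iff_zsmul {M : Type*} [AddCommGroup M] [Module ℤ M] (N : Submodule ℤ M) :
    N.IsPrimitive ↔ ∀ (a : M) (c : ℤ), c ≠ 0 → c • a ∈ N → a ∈ N := by
  simp only [IsPrimitive, ← Int.cast_smul_eq_zsmul ℤ, Int.cast_id]

end Submodule

lemma Module.Basis.linearIndependent_comp_iff_ker_eq_bot {ι R M M' : Type*} [CommRing R]
    [AddCommGroup M] [Module R M] [AddCommGroup M'] [Module R M'] (b : Module.Basis ι R M)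
    (g : M →ₗ[R] M') : LinearIndependent R (g ∘ b) ↔ LinearMap.ker g = ⊥ := by
  refine ⟨fun hind => LinearMap.ker_eq_bot'.mpr fun x hx => ?_, b.linearIndependent.map' g⟩
  have hcomb : Finsupp.linearCombination R (g ∘ b) (b.repr x) = 0 := by
    rw [← Finsupp.apply_linearCombination, b.linearCombination_repr, hx]
  simpa using hind (hcomb.trans (map_zero _).symm)

namespace Module.End

variable {R M : Type*} [CommRing R] [AddCommGroup M] [Module R M] (f : Module.End R M) (e : M)

def krylov (d : ℕ) : Fin d → M := fun j => (f ^ (j : ℕ)) e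

noncomputable def aevalAt : R[X] →ₗ[R] M := LinearMap.applyₗ e ∘ₗ (aeval f).toLinearMap

@[simp] lemma aevalAt_apply (q : R[X]) : aevalAt f e q = aeval f q e := rfl

lemma aeval_eq_of_subsingleton [Subsingleton (Algebra R (Module.End R M))]
    (i : Algebra R (Module.End R M)) (q : R[X]) :
    @aeval R _ _ _ i f q = @aeval R _ _ _ (Module.End.instAlgebra R R M) f q := by
  rw [Subsingleton.elim i (Module.End.instAlgebra R R M)]

lemma aeval_mul_apply (a b : R[X]) : aeval f (a * b) e = aeval f a (aeval f b e) := by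
  rw [map_mul, Module.End.mul_apply]

lemma krylov_eq_aevalAt_comp_basis (d : ℕ) :
    krylov f e d = (aevalAt f e ∘ₗ (degreeLT R d).subtype) ∘ degreeLT.basis R d := by
  ext j
  simp [krylov]

lemma span_krylov (d : ℕ) :
    span R (Set.range (krylov f e d)) = (degreeLT R d).map (aevalAt f e) := by
  rw [krylov_eq_aevalAt_comp_basis, Set.range_comp, span_image, (degreeLT.basis R d).span_eq,
    Submodule.map_comp, map_subtype_top]

lemma linearIndependent_krylov_iff (d : ℕ) :
    LinearIndependent R (krylov f e d) ↔ ∀ q ∈ degreeLT R d, aeval f q e = 0 → q = 0 := by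
  rw [krylov_eq_aevalAt_comp_basis, Module.Basis.linearIndependent_comp_iff_ker_eq_bot,
    LinearMap.ker_eq_bot']
  simp [Subtype.forall]

variable {f e}

lemma aeval_modByMonic_apply {p : R[X]} (hpe : aeval f p e = 0) (q : R[X]) :
    aeval f (q %ₘ p) e = aeval f q e := by
  conv_rhs => rw [← modByMonic_add_div q p]
  rw [map_add, LinearMap.add_apply, mul_comm, aeval_mul_apply, hpe, map_zero, add_zero]

lemma dvd_of_aeval_apply_eq_zero [Nontrivial R] {p : R[X]} (hp : p.Monic)
    (hpe : aeval f p e = 0) (hind : LinearIndependent R (krylov f e p.natDegree)) {q : R[X]}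
    (hq : aeval f q e = 0) : p ∣ q := by
  rw [← modByMonic_eq_zero_iff_dvd hp]
  refine (linearIndependent_krylov_iff f e _).mp hind _ ?_
    ((aeval_modByMonic_apply hpe q).trans hq)
  rw [mem_degreeLT, ← degree_eq_natDegree hp.ne_zero]
  exact degree_modByMonic_lt q hp

section Factor

variable [IsDomain R] {p₁ p₂ : R[X]}

lemma linearIndependent_krylov_aeval (hp : p₁ * p₂ ≠ 0)
    (hind : LinearIndependent R (krylov f e (p₁ * p₂).natDegree)) :
    LinearIndependent R (krylov f (aeval f p₂ e) p₁.natDegree) := by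
  obtain ⟨hp₁, hp₂⟩ := mul_ne_zero_iff.mp hp
  rw [linearIndependent_krylov_iff] at hind ⊢
  intro s hs hse
  have hmul : p₂ * s = 0 := hind _ ((mul_mem_degreeLT_natDegree_mul_iff hp₁ hp₂ s).mpr hs)
    (by rw [mul_comm, aeval_mul_apply, hse])
  exact (mul_eq_zero.mp hmul).resolve_left hp₂

lemma span_krylov_inf_ker_aeval (hp : (p₁ * p₂).Monic) (hpe : aeval f (p₁ * p₂) e = 0)
    (hind : LinearIndependent R (krylov f e (p₁ * p₂).natDegree)) :
    span R (Set.range (krylov f e (p₁ * p₂).natDegree)) ⊓ LinearMap.ker (aeval f p₁) =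
      span R (Set.range (krylov f (aeval f p₂ e) p₁.natDegree)) := by
  obtain ⟨hp₁, hp₂⟩ := mul_ne_zero_iff.mp hp.ne_zero
  rw [span_krylov, span_krylov]
  ext x
  simp only [mem_inf, mem_map, LinearMap.mem_ker, aevalAt_apply]
  constructor
  · rintro ⟨⟨q, hq, rfl⟩, hqe⟩
    rw [← aeval_mul_apply] at hqe
    obtain ⟨s, rfl⟩ : p₂ ∣ q :=
      (mul_dvd_mul_iff_left hp₁).mp (dvd_of_aeval_apply_eq_zero hp hpe hind hqe)
    exact ⟨s, (mul_mem_degreeLT_natDegree_mul_iff hp₁ hp₂ s).mp hq,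
      by rw [← aeval_mul_apply, mul_comm]⟩
  · rintro ⟨s, hs, rfl⟩
    refine ⟨⟨p₂ * s, (mul_mem_degreeLT_natDegree_mul_iff hp₁ hp₂ s).mpr hs, ?_⟩, ?_⟩
    · rw [mul_comm, aeval_mul_apply]
    · rw [← aeval_mul_apply, ← aeval_mul_apply, mul_right_comm, mul_comm, aeval_mul_apply, hpe,
        map_zero]

end Factor

end Module.End

theorem stmt_10_general (Λ : Type*) [AddCommGroup Λ] [Module ℤ Λ]
    [Module.Free ℤ Λ]
    (Mend : Module.End ℤ Λ)
    (N : Submodule ℤ Λ) (e : Λ) (p p₁ p₂ : Polynomial ℤ)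
    (hp : p = p₁ * p₂) (hpm : p.Monic)
    (hNspan : N = Submodule.span ℤ
      (Set.range fun j : Fin p.natDegree => (Mend ^ (j : ℕ)) e))
    (hNind : LinearIndependent ℤ (fun j : Fin p.natDegree => (Mend ^ (j : ℕ)) e))
    (hNprim : ∀ (a : Λ) (c : ℤ), c ≠ 0 → c • a ∈ N → a ∈ N)
    (hpe : (Polynomial.aeval Mend p) e = 0) :
    LinearIndependent ℤ
      (fun j : Fin p₁.natDegree => (Mend ^ (j : ℕ)) ((Polynomial.aeval Mend p₂) e)) ∧
    N ⊓ LinearMap.ker (Polynomial.aeval Mend p₁)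
      = Submodule.span ℤ
          (Set.range fun j : Fin p₁.natDegree =>
            (Mend ^ (j : ℕ)) ((Polynomial.aeval Mend p₂) e)) ∧
    (∀ (a : Λ) (c : ℤ), c ≠ 0 →
      c • a ∈ N ⊓ LinearMap.ker (Polynomial.aeval Mend p₁) →
      a ∈ N ⊓ LinearMap.ker (Polynomial.aeval Mend p₁)) := by
  subst hp hNspan
  -- Here `aeval` uses `Ring.toIntAlgebra` and `c • a` is `zsmul`, whereas the lemmas above use
  -- `Module.End.instAlgebra` and the given `Module ℤ Λ`; both pairs agree only propositionally.
  simp only [aeval_eq_of_subsingleton Mend (Ring.toIntAlgebra _)] at hpe ⊢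
  rw [← isPrimitive_iff_zsmul] at hNprim ⊢
  exact ⟨linearIndependent_krylov_aeval hpm.ne_zero hNind,
    span_krylov_inf_ker_aeval hpm hpe hNind, hNprim.inf (isPrimitive_ker _)⟩

/-- If `N` is an Orlik block with cyclic generator `e` and characteristic polynomial
`p = p₁ · p₂` (both factors of positive degree), then `N_{p₁} = N ⊓ ker p₁(M)` is again an
Orlik block, with cyclic generator `p₂(M)(e)`. -/
theorem stmt_10 (Λ : Type*) [AddCommGroup Λ] [Module ℤ Λ]
    [Module.Free ℤ Λ] [Module.Finite ℤ Λ]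
    (M : Λ ≃ₗ[ℤ] Λ) (n : ℕ) (hn : 0 < n) (hMn : M ^ n = 1)
    (Mend : Module.End ℤ Λ) (hMend : Mend = M.toLinearMap)
    (N : Submodule ℤ Λ) (e : Λ) (p p₁ p₂ : Polynomial ℤ)
    (hp : p = p₁ * p₂) (hpm : p.Monic)
    (hdeg1 : 1 ≤ p₁.natDegree) (hdeg2 : 1 ≤ p₂.natDegree)
    (hNspan : N = Submodule.span ℤ
      (Set.range fun j : Fin p.natDegree => (Mend ^ (j : ℕ)) e))
    (hNind : LinearIndependent ℤ (fun j : Fin p.natDegree => (Mend ^ (j : ℕ)) e))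
    (hNprim : ∀ (a : Λ) (c : ℤ), c ≠ 0 → c • a ∈ N → a ∈ N)
    (hpe : (Polynomial.aeval Mend p) e = 0) :
    LinearIndependent ℤ
      (fun j : Fin p₁.natDegree => (Mend ^ (j : ℕ)) ((Polynomial.aeval Mend p₂) e)) ∧
    N ⊓ LinearMap.ker (Polynomial.aeval Mend p₁)
      = Submodule.span ℤ
          (Set.range fun j : Fin p₁.natDegree =>
            (Mend ^ (j : ℕ)) ((Polynomial.aeval Mend p₂) e)) ∧
    (∀ (a : Λ) (c : ℤ), c ≠ 0 →
      c • a ∈ N ⊓ LinearMap.ker (Polynomial.aeval Mend p₁) →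
      a ∈ N ⊓ LinearMap.ker (Polynomial.aeval Mend p₁)) :=
  stmt_10_general Λ Mend N e p p₁ p₂ hp hpm hNspan hNind hNprim hpe
end

section
/- Let f be an isolated hypersurface singularity in n+1 variables, and for z ≠ 0 let γ_{-π} : H^n(f^{-1}(z), ℂ) → H^n(f^{-1}(-z), ℂ) be the flat shift in mathematically negative direction in the cohomology bundle of the Milnor fibration, and γ_π the shift in positive direction, so that M_h ∘ γ_{-π} = γ_π. Define P(a, b) := (2πi)^{-(n+1)} · L^{nor}(a, γ_{-π}(b)) for a ∈ H^n(f^{-1}(z), ℂ), b ∈ H^n(f^{-1}(-z), ℂ), where L^{nor} is the dual normalized Seifert form satisfying L^{nor}(M_h a, b) = (-1)^{n+1} L^{nor}(b, a). Then P is (-1)^{n+1}-symmetric, i.e. P(b, a) = (-1)^{n+1} P(a, b). -/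
/-- The pairing `P(a,b) = (2πi)^{-(n+1)} L(a, γ₋π b)` of Lefschetz-thimble type is
`(-1)^{n+1}`-symmetric, given `M ∘ γ₋π = γπ`, the twisted symmetry
`L(Ma,b) = (-1)^{n+1} L(b,a)`, and shift-invariance `L(γπ a, b) = L(a, γ₋π b)`. -/
theorem stmt_15 (H : Type*) [AddCommGroup H] [Module ℂ H]
    (n : ℕ)
    (L : H →ₗ[ℂ] H →ₗ[ℂ] ℂ)
    (hLnd : ∀ a : H, (∀ b : H, L a b = 0) → a = 0)
    (M γm γp : H →ₗ[ℂ] H)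
    (hMγ : ∀ a : H, M (γm a) = γp a)
    (hLM : ∀ a b : H, L (M a) b = (-1) ^ (n + 1) * L b a)
    (hshift : ∀ a b : H, L (γp a) b = L a (γm b))
    (P : H → H → ℂ)
    (hP : ∀ a b : H, P a b = ((2 * Real.pi * Complex.I) ^ (n + 1))⁻¹ * L a (γm b)) :
    ∀ a b : H, P b a = (-1) ^ (n + 1) * P a b := by
  intro a b
  rw [hP, hP, ← hshift, ← hMγ, hLM]
  ring
end

section
/- Let Λ = Λ⁽¹⁾ ⊕ ... ⊕ Λ⁽ᵏ⁾ be a direct sum of Orlik blocks for a finite-order automorphism M_h, with cyclic generators e⁽¹⁾,...,e⁽ᵏ⁾. Let p₀ ∈ ℤ[t] divide gcd(p_{Λ⁽¹⁾},...,p_{Λ⁽ᵏ⁾}), and let g be an automorphism of Λ commuting with M_h such that g = id on Λ⁽ʲ⁾_{p_{Λ⁽ʲ⁾}/p₀} for every j. Then the unique polynomials p_{ij} ∈ ℤ[t]_{< rank Λ⁽ʲ⁾} with g(e⁽ʲ⁾) = Σ_i p_{ij}(M_h)(e⁽ⁱ⁾) satisfy p_{ij} = δ_{ij} + (p_{Λ⁽ⁱ⁾}/p₀)·q_{ij}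 for suitable q_{ij} ∈ ℤ[t]_{< deg p₀}. Moreover, for a root ξ of p₀, g acts on the eigenvectors v(e⁽ʲ⁾, ξ) = (p_{Λ⁽ʲ⁾}/(t-ξ))(M_h)(e⁽ʲ⁾) by g(v(e⁽ʲ⁾, ξ)) = Σ_i (δ_{ij} + (p_{Λ⁽ʲ⁾}/p₀)·q_{ij})(ξ) · v(e⁽ⁱ⁾, ξ). -/
/-!
Write `T` for `M_h`. As the `Tᵐ eᵢ` with `m < deg pᵢ` span `Λ`, `g eⱼ - eⱼ = ∑ᵢ sᵢⱼ(T) eᵢ`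
with `deg sᵢⱼ < deg pᵢ`. The vector `p₀(T) eⱼ` lies in the block of `eⱼ` and is killed by
`rⱼ(T)`, where `pⱼ = p₀ rⱼ`, so `g` fixes it; as `g` commutes with `T`, `p₀(T)` kills
`g eⱼ - eⱼ`. Linear independence of the `Tᵐ eᵢ` turns `∑ᵢ (p₀ sᵢⱼ)(T) eᵢ = 0` into
`pᵢ ∣ p₀ sᵢⱼ`, i.e. `sᵢⱼ = rᵢ qᵢⱼ`, and the degree bound on `sᵢⱼ` gives `deg qᵢⱼ < deg p₀`.

For the eigenvectors, `(X - ξ) uᵢ = pᵢ` gives `uⱼ rᵢ = uᵢ rⱼ`, and for any `f`,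
`uᵢ f ≡ f(ξ) uᵢ` modulo `pᵢ`, which annihilates `eᵢ`. Hence `uⱼ(T)` applied to the term
`(rᵢ qᵢⱼ)(T) eᵢ` of `g eⱼ` is `(rⱼ qᵢⱼ)(ξ) · uᵢ(T) eᵢ`.
-/

open scoped TensorProduct
open Polynomial Submodule

namespace Polynomial

section Module

variable {R N : Type*} [CommRing R] [AddCommGroup N] [Module R N] (T : Module.End R N)

theorem aeval_apply_eq_sum_fin {f : R[X]} {n : ℕ} (hf : f.degree < n) (x : N) :
    aeval T f x = ∑ m : Fin n, f.coeff m • (T ^ (m : ℕ)) x := by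
  rcases eq_or_ne f 0 with rfl | hf0
  · simp
  rw [aeval_eq_sum_range' ((natDegree_lt_iff_degree_lt hf0).mpr hf),
    Fin.sum_univ_eq_sum_range (fun m => f.coeff m • (T ^ m) x)]
  simp [LinearMap.sum_apply]

theorem aeval_mul_apply_eq_zero {p : R[X]} {x : N} (hx : aeval T p x = 0) (f : R[X]) :
    aeval T (p * f) x = 0 := by
  rw [mul_comm, map_mul, Module.End.mul_apply, hx, map_zero]

theorem aeval_modByMonic_apply {p : R[X]} {x : N} (hx : aeval T p x = 0) (f : R[X]) :
    aeval T (f %ₘ p) x = aeval T f x := by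
  conv_rhs => rw [← modByMonic_add_div f p]
  rw [map_add, LinearMap.add_apply, aeval_mul_apply_eq_zero T hx, add_zero]

theorem degree_modByMonic_lt_natDegree [Nontrivial R] (f : R[X]) {p : R[X]} (hp : p.Monic) :
    (f %ₘ p).degree < p.natDegree :=
  (degree_modByMonic_lt f hp).trans_le degree_le_natDegree

theorem aeval_apply_mem_span_pow [Nontrivial R] {p : R[X]} (hp : p.Monic) {x : N}
    (hx : aeval T p x = 0) (f : R[X]) :
    aeval T f x ∈ span R (Set.range fun m : Fin p.natDegree => (T ^ (m : ℕ)) x) := by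
  rw [← aeval_modByMonic_apply T hx,
    aeval_apply_eq_sum_fin T (degree_modByMonic_lt_natDegree f hp)]
  exact sum_mem fun m _ => smul_mem _ _ (subset_span ⟨m, rfl⟩)

theorem apply_aeval_apply_of_commute {g : Module.End R N} (hgT : Commute g T) (f : R[X])
    (x : N) : g (aeval T f x) = aeval T f (g x) :=
  LinearMap.congr_fun
    (Algebra.commute_of_mem_adjoin_singleton_of_commute (aeval_mem_adjoin_singleton R T) hgT) x

theorem aeval_mul_apply_eq_eval_smul {ξ : R} {u p : R[X]} (hu : (X - C ξ) * u = p) {x : N}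
    (hx : aeval T p x = 0) (f : R[X]) :
    aeval T (u * f) x = f.eval ξ • aeval T u x := by
  obtain ⟨h, hh⟩ := X_sub_C_dvd_sub_C_eval (a := ξ) (p := f)
  have : u * f = C (f.eval ξ) * u + p * h := by
    rw [← hu]
    linear_combination u * hh
  rw [this, map_add, LinearMap.add_apply, aeval_mul_apply_eq_zero T hx, add_zero, map_mul,
    aeval_C, Module.End.mul_apply, Module.algebraMap_end_apply]

variable {ι : Type*} [Fintype ι]

theorem exists_sum_aeval_apply_of_mem_span {e : ι → N} {n : ι → ℕ} {x : N}
    (hx : x ∈ span R (Set.range fun y : Σ i, Fin (n i) => (T ^ (y.2 : ℕ)) (e y.1))) :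
    ∃ s : ι → R[X], (∀ i, (s i).degree < n i) ∧ x = ∑ i, aeval T (s i) (e i) := by
  classical
  simp_rw [← mem_degreeLT]
  induction hx using span_induction with
  | mem _ hx =>
    obtain ⟨⟨i, m⟩, rfl⟩ := hx
    refine ⟨Pi.single i (X ^ (m : ℕ)), fun j => ?_, ?_⟩
    · rcases eq_or_ne j i with rfl | hj
      · simpa [mem_degreeLT] using
          (degree_X_pow_le (R := R) (m : ℕ)).trans_lt (by exact_mod_cast m.isLt)
      · simp [hj]
    · rw [Finset.sum_eq_single i (fun j _ hj => by simp [hj]) (by simp)]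
      simp
  | zero => exact ⟨0, fun _ => zero_mem _, by simp⟩
  | add _ _ _ _ ha hb =>
    obtain ⟨s, hs, rfl⟩ := ha
    obtain ⟨t, ht, rfl⟩ := hb
    exact ⟨s + t, fun i => add_mem (hs i) (ht i), by simp [Finset.sum_add_distrib]⟩
  | smul a _ _ ha =>
    obtain ⟨s, hs, rfl⟩ := ha
    exact ⟨a • s, fun i => smul_mem _ a (hs i), by simp [Finset.smul_sum]⟩

theorem dvd_of_sum_aeval_apply_eq_zero [Nontrivial R] {e : ι → N} {p : ι → R[X]}
    (hp : ∀ i, (p i).Monic) (hpe : ∀ i, aeval T (p i) (e i) = 0)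
    (hind : LinearIndependent R fun y : Σ i, Fin (p i).natDegree => (T ^ (y.2 : ℕ)) (e y.1))
    {f : ι → R[X]} (hf : ∑ i, aeval T (f i) (e i) = 0) (i : ι) : p i ∣ f i := by
  have hcoeff := Fintype.linearIndependent_iff.mp hind
    (fun y => (f y.1 %ₘ p y.1).coeff y.2) (by
      rw [← Finset.univ_sigma_univ, Finset.sum_sigma, ← hf]
      refine Finset.sum_congr rfl fun i _ => ?_
      rw [← aeval_modByMonic_apply T (hpe i),
        aeval_apply_eq_sum_fin T (degree_modByMonic_lt_natDegree _ (hp i))])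
  rw [← modByMonic_eq_zero_iff_dvd (hp i)]
  ext m
  rcases lt_or_ge m (p i).natDegree with hm | hm
  · exact hcoeff ⟨i, m, hm⟩
  · exact coeff_eq_zero_of_degree_lt
      ((degree_modByMonic_lt_natDegree _ (hp i)).trans_le (by exact_mod_cast hm))

end Module

theorem aeval_baseChange_map_tmul {R A M : Type*} [CommRing R] [CommRing A] [Algebra R A]
    [AddCommGroup M] [Module R M] (T : Module.End R M) (f : R[X]) (m : M) :
    aeval (T.baseChange A) (f.map (algebraMap R A)) (1 ⊗ₜ m) = 1 ⊗ₜ aeval T f m := by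
  rw [aeval_map_algebraMap]
  change aeval (Module.End.baseChangeHom R A M T) f _ = _
  rw [aeval_algHom_apply]
  rfl

end Polynomial

section Blocks

variable {ι : Type*} [Fintype ι]

theorem exists_eq_add_sum_aeval_of_fixed_on_blocks {R N : Type*} [CommRing R] [IsDomain R]
    [AddCommGroup N] [Module R N] (T g : Module.End R N) (hgT : Commute g T)
    (e : ι → N) (p : ι → R[X]) (hp : ∀ i, (p i).Monic) (hpe : ∀ i, aeval T (p i) (e i) = 0)
    (hind : LinearIndependent R fun y : Σ i, Fin (p i).natDegree => (T ^ (y.2 : ℕ)) (e y.1))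
    (hspan : span R (Set.range fun y : Σ i, Fin (p i).natDegree => (T ^ (y.2 : ℕ)) (e y.1)) = ⊤)
    (p₀ : R[X]) (r : ι → R[X]) (hr : ∀ i, p₀ * r i = p i)
    (hg : ∀ i a, a ∈ span R (Set.range fun m : Fin (p i).natDegree => (T ^ (m : ℕ)) (e i)) →
      aeval T (r i) a = 0 → g a = a) :
    ∃ q : ι → ι → R[X], (∀ i j, (q i j).degree < p₀.degree) ∧
      ∀ j, g (e j) = e j + ∑ i, aeval T (r i * q i j) (e i) := by
  choose s hs_deg hs using fun j =>
    exists_sum_aeval_apply_of_mem_span T (hspan ▸ mem_top : g (e j) - e j ∈ _)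
  have hfix : ∀ j, g (aeval T p₀ (e j)) = aeval T p₀ (e j) := fun j =>
    hg j _ (aeval_apply_mem_span_pow T (hp j) (hpe j) p₀) (by
      rw [← Module.End.mul_apply, ← map_mul, mul_comm, hr, hpe])
  have hdvd : ∀ i j, p i ∣ p₀ * s j i := fun i j =>
    dvd_of_sum_aeval_apply_eq_zero T hp hpe hind (f := fun i => p₀ * s j i) (by
      simp only [map_mul, Module.End.mul_apply, ← map_sum, ← hs j, map_sub,
        ← apply_aeval_apply_of_commute T hgT, hfix, sub_self]) i
  have hp₀ : ∀ i, p₀ ≠ 0 := fun i h => (hp i).ne_zero (by rw [← hr i, h, zero_mul])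
  choose q hq using fun i j => (mul_dvd_mul_iff_left (hp₀ i)).mp (hr i ▸ hdvd i j)
  refine ⟨q, fun i j => ?_, fun j => by rw [← sub_eq_iff_eq_add', hs j]; simp only [hq]⟩
  have hlt : (r i * q i j).degree < (r i * p₀).degree := by
    rw [← hq, mul_comm, hr, degree_eq_natDegree (hp i).ne_zero]
    exact hs_deg j i
  have hr₀ : r i ≠ 0 := fun h => (hp i).ne_zero (by rw [← hr i, h, mul_zero])
  rw [degree_mul, degree_mul] at hlt
  exact (WithBot.add_lt_add_iff_left (degree_ne_bot.mpr hr₀)).mp hlt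

theorem apply_aeval_eq_sum_eval_smul [DecidableEq ι] {A V : Type*} [CommRing A]
    [AddCommGroup V] [Module A V] (T g : Module.End A V) (hgT : Commute g T) (x : ι → V)
    (p : ι → A[X]) (hpx : ∀ i, aeval T (p i) (x i) = 0) (p₀ : A[X]) (r : ι → A[X])
    (hr : ∀ i, p₀ * r i = p i) (q : ι → ι → A[X])
    (hg : ∀ j, g (x j) = x j + ∑ i, aeval T (r i * q i j) (x i))
    (ξ : A) (u : ι → A[X]) (hu : ∀ i, (X - C ξ) * u i = p i) (j : ι) :
    g (aeval T (u j) (x j)) =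
      ∑ i, (if i = j then 1 + r j * q i j else r j * q i j).eval ξ • aeval T (u i) (x i) := by
  have hcross : ∀ i, u j * r i = u i * r j := fun i =>
    (monic_X_sub_C ξ).isRegular.left <| by
      simp only [← mul_assoc, hu, ← hr]
      ring
  have hterm : ∀ i, aeval T (u j) (aeval T (r i * q i j) (x i)) =
      (r j * q i j).eval ξ • aeval T (u i) (x i) := fun i => by
    rw [← Module.End.mul_apply, ← map_mul, ← mul_assoc, hcross, mul_assoc,
      aeval_mul_apply_eq_eval_smul T (hu i) (hpx i)]
  have hδ : ∀ i, (if i = j then 1 + r j * q i j else r j * q i j).eval ξ =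
      (if i = j then 1 else 0) + (r j * q i j).eval ξ := fun i => by
    split_ifs <;> simp
  simp only [hδ, add_smul, ite_smul, one_smul, zero_smul, Finset.sum_add_distrib,
    Finset.sum_ite_eq', Finset.mem_univ, if_true]
  rw [apply_aeval_apply_of_commute T hgT, hg j, map_add, map_sum,
    Finset.sum_congr rfl fun i _ => hterm i]

end Blocks

theorem stmt_17_general (Λ : Type*) [AddCommGroup Λ] [Module ℤ Λ]
    (M : Λ ≃ₗ[ℤ] Λ)
    (Mend : Module.End ℤ Λ) (hMend : Mend = M.toLinearMap)
    (k : ℕ) (e : Fin k → Λ) (p : Fin k → Polynomial ℤ)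
    (hpm : ∀ i, (p i).Monic)
    (hpe : ∀ i, (Polynomial.aeval Mend (p i)) (e i) = 0)
    (hind : LinearIndependent ℤ
      (fun x : Σ i : Fin k, Fin (p i).natDegree => (Mend ^ (x.2 : ℕ)) (e x.1)))
    (hspan : Submodule.span ℤ
      (Set.range fun x : Σ i : Fin k, Fin (p i).natDegree => (Mend ^ (x.2 : ℕ)) (e x.1)) = ⊤)
    (g : Λ ≃ₗ[ℤ] Λ) (hgM : ∀ a : Λ, g (M a) = M (g a))
    (p₀ : Polynomial ℤ) (r : Fin k → Polynomial ℤ)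
    (hr : ∀ i, p₀ * r i = p i)
    (hgid : ∀ (i : Fin k) (a : Λ),
      a ∈ Submodule.span ℤ
        (Set.range fun j : Fin (p i).natDegree => (Mend ^ (j : ℕ)) (e i)) →
      (Polynomial.aeval Mend (r i)) a = 0 → g a = a) :
    ∃ q : Fin k → Fin k → Polynomial ℤ,
      (∀ i j, (q i j).degree < p₀.degree) ∧
      (∀ j, g (e j) = e j + ∑ i, (Polynomial.aeval Mend (r i * q i j)) (e i)) ∧
      (∀ ξ : ℂ, Polynomial.aeval ξ p₀ = 0 →
        ∀ u : Fin k → Polynomial ℂ,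
          (∀ i, (Polynomial.X - Polynomial.C ξ) * u i = (p i).map (Int.castRingHom ℂ)) →
          ∀ j,
            (LinearMap.baseChange ℂ g.toLinearMap)
                ((Polynomial.aeval
                    (LinearMap.baseChange ℂ Mend : Module.End ℂ (ℂ ⊗[ℤ] Λ)) (u j))
                  ((1 : ℂ) ⊗ₜ[ℤ] e j))
              = ∑ i,
                  (Polynomial.aeval ξ (if i = j then 1 + r j * q i j else r j * q i j)) •
                    ((Polynomial.aeval
                        (LinearMap.baseChange ℂ Mend : Module.End ℂ (ℂ ⊗[ℤ] Λ)) (u i))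
                      ((1 : ℂ) ⊗ₜ[ℤ] e i))) := by
  -- `aeval Mend` here uses the algebra `Ring.toIntAlgebra`, the general lemmas use
  -- `Module.End.instAlgebra`; they agree because a ring has only one `ℤ`-algebra structure.
  have hgT : Commute g.toLinearMap Mend := LinearMap.ext fun a => by simp [hMend, hgM a]
  obtain ⟨q, hq, hge⟩ := exists_eq_add_sum_aeval_of_fixed_on_blocks Mend g.toLinearMap hgT
    e p hpm (by convert hpe <;> first | rfl | exact Subsingleton.elim _ _) hind hspan p₀ r hr
    (by convert hgid <;> first | rfl | exact Subsingleton.elim _ _)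
  refine ⟨q, hq, by convert hge <;> first | rfl | exact Subsingleton.elim _ _,
    fun ξ _ u hu j => ?_⟩
  let φ := algebraMap ℤ ℂ
  have hpx : ∀ i, aeval (Mend.baseChange ℂ) ((p i).map φ) (1 ⊗ₜ e i) = 0 := fun i => by
    rw [aeval_baseChange_map_tmul, ← TensorProduct.tmul_zero Λ (1 : ℂ)]
    congr 1
    convert hpe i <;> first | rfl | exact Subsingleton.elim _ _
  have hgx : ∀ j, g.toLinearMap.baseChange ℂ (1 ⊗ₜ e j) = 1 ⊗ₜ e j +
      ∑ i, aeval (Mend.baseChange ℂ) ((r i).map φ * (q i j).map φ) (1 ⊗ₜ e i) := fun j => by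
    rw [LinearMap.baseChange_tmul, hge j, TensorProduct.tmul_add, TensorProduct.tmul_sum]
    exact congrArg _ (Finset.sum_congr rfl fun i _ => by
      rw [← Polynomial.map_mul, aeval_baseChange_map_tmul])
  rw [apply_aeval_eq_sum_eval_smul (Mend.baseChange ℂ) (g.toLinearMap.baseChange ℂ)
    (hgT.map (Module.End.baseChangeHom ℤ ℂ Λ)) (fun i => 1 ⊗ₜ[ℤ] e i) (fun i => (p i).map φ)
    hpx (p₀.map φ) (fun i => (r i).map φ) (fun i => by rw [← Polynomial.map_mul, hr])
    (fun i j => (q i j).map φ) hgx ξ u (by simpa [φ, algebraMap_int_eq] using hu) j]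
  refine Finset.sum_congr rfl fun i _ => ?_
  split_ifs
  · rw [← Polynomial.map_mul, ← Polynomial.map_one φ, ← Polynomial.map_add, eval_map_algebraMap]
  · rw [← Polynomial.map_mul, eval_map_algebraMap]

/-- For an automorphism `g` of a direct sum of Orlik blocks commuting with the monodromy
and acting as the identity on each `Λ⁽ʲ⁾_{pⱼ/p₀}`, the coefficient polynomials satisfy
`p_{ij} = δ_{ij} + (p_i/p₀)·q_{ij}` with `q_{ij} ∈ ℤ[t]_{<deg p₀}`, and for a root `ξ` of
`p₀` the action of `g` on the eigenvectors `v(e⁽ʲ⁾, ξ)` is given by evaluating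
`δ_{ij} + (pⱼ/p₀)·q_{ij}` at `ξ`. -/
theorem stmt_17 (Λ : Type*) [AddCommGroup Λ] [Module ℤ Λ]
    [Module.Free ℤ Λ] [Module.Finite ℤ Λ]
    (M : Λ ≃ₗ[ℤ] Λ) (nn : ℕ) (hnn : 0 < nn) (hMn : M ^ nn = 1)
    (Mend : Module.End ℤ Λ) (hMend : Mend = M.toLinearMap)
    (k : ℕ) (e : Fin k → Λ) (p : Fin k → Polynomial ℤ)
    (hpm : ∀ i, (p i).Monic)
    (hpe : ∀ i, (Polynomial.aeval Mend (p i)) (e i) = 0)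
    (hind : LinearIndependent ℤ
      (fun x : Σ i : Fin k, Fin (p i).natDegree => (Mend ^ (x.2 : ℕ)) (e x.1)))
    (hspan : Submodule.span ℤ
      (Set.range fun x : Σ i : Fin k, Fin (p i).natDegree => (Mend ^ (x.2 : ℕ)) (e x.1)) = ⊤)
    (g : Λ ≃ₗ[ℤ] Λ) (hgM : ∀ a : Λ, g (M a) = M (g a))
    (p₀ : Polynomial ℤ) (r : Fin k → Polynomial ℤ)
    (hr : ∀ i, p₀ * r i = p i)
    (hgid : ∀ (i : Fin k) (a : Λ),
      a ∈ Submodule.span ℤ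
        (Set.range fun j : Fin (p i).natDegree => (Mend ^ (j : ℕ)) (e i)) →
      (Polynomial.aeval Mend (r i)) a = 0 → g a = a) :
    ∃ q : Fin k → Fin k → Polynomial ℤ,
      (∀ i j, (q i j).degree < p₀.degree) ∧
      (∀ j, g (e j) = e j + ∑ i, (Polynomial.aeval Mend (r i * q i j)) (e i)) ∧
      (∀ ξ : ℂ, Polynomial.aeval ξ p₀ = 0 →
        ∀ u : Fin k → Polynomial ℂ,
          (∀ i, (Polynomial.X - Polynomial.C ξ) * u i = (p i).map (Int.castRingHom ℂ)) →
          ∀ j,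
            (LinearMap.baseChange ℂ g.toLinearMap)
                ((Polynomial.aeval
                    (LinearMap.baseChange ℂ Mend : Module.End ℂ (ℂ ⊗[ℤ] Λ)) (u j))
                  ((1 : ℂ) ⊗ₜ[ℤ] e j))
              = ∑ i,
                  (Polynomial.aeval ξ (if i = j then 1 + r j * q i j else r j * q i j)) •
                    ((Polynomial.aeval
                        (LinearMap.baseChange ℂ Mend : Module.End ℂ (ℂ ⊗[ℤ] Λ)) (u i))
                      ((1 : ℂ) ⊗ₜ[ℤ] e i))) :=
  stmt_17_general Λ M Mend hMend k e p hpm hpe hind hspan g hgM p₀ r hr hgid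
end

section
/- Let Γ ⊂ GL(2, ℂ) be the unitary group of the hermitian form diag(-1, w) over ℤ[ζ] as in the quadrangle setting, i.e. Γ = {A ∈ GL(2, ℤ[ζ]) : diag(-1,w) = Aᵗ·diag(-1,w)·Ā}, where ζ = e^{2πi/m}, w(ζ) > 0 and w(ξ) < 0 for primitive m-th roots of unity ξ ∉ {ζ, ζ̄}. Then every A = [[a,b],[c,d]] ∈ Γ satisfies |a(ζ)| ≥ 1, and |a(ξ)| ≤ 1 together with |c(ξ)|² < (-w(ξ))^{-1} for every primitive m-th root of unity ξ ∉ {ζ, ζ̄} (where a(ξ), c(ξ) denote the Galois conjugates of a, c). Consequently Γ is a discrete subgroup of GL(2, ℂ). -/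
/-!
The ring `ℤ[ζ]` is stable under complex conjugation (`ζ̄ = ζ^(m-1)`), and every ring embedding
`σ : ℤ[ζ] → ℂ` commutes with it. Clearing the denominators of `w = q(ζ)`, the diagonal entries of
`diag(-1, w) = Aᵗ diag(-1, w) Ā` become identities in `ℤ[ζ]`, so `σ` carries them to
`|σ a|² - 1 = w(ξ) |σ c|²` and `|σ b|² = w(ξ) (|σ d|² - 1)` with `ξ = σ ζ`. The signs of `w(ζ)`
and `w(ξ)` give the inequalities; `σ a ≠ 0` because `ℤ[ζ]` is integral over `ℤ`, which forces `σ`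
to be injective. Near a fixed `A₀ ∈ Γ` all entries are bounded at the embeddings `ξ ∈ {ζ, ζ̄}`,
and at the others by the relations above, so they lie in a finite set of algebraic integers of
`ℚ(ζ)`: every point of `Γ` is isolated.
-/

open Complex ComplexConjugate Polynomial
open scoped Algebra Topology

theorem Algebra.IsIntegral.adjoin_singleton {R A : Type*} [CommRing R] [CommRing A] [Algebra R A]
    {x : A} (hx : IsIntegral R x) : Algebra.IsIntegral R R[x] :=
  Algebra.IsIntegral.adjoin (by simpa using hx)

theorem RingHom.injective_of_isIntegral_int {R K : Type*} [CommRing R] [IsDomain R]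
    [Algebra.IsIntegral ℤ R] [Field K] [CharZero K] (σ : R →+* K) : Function.Injective σ := by
  rw [RingHom.injective_iff_ker_eq_bot]
  refine Ideal.eq_bot_of_comap_eq_bot (R := ℤ) ?_
  rw [RingHom.comap_ker, ← RingHom.injective_iff_ker_eq_bot]
  exact (σ.comp (algebraMap ℤ R)).injective_int

theorem discreteTopology_of_finite_inter_nhds {X : Type*} [TopologicalSpace X] [T1Space X]
    {S : Set X} (h : ∀ x ∈ S, ∃ U ∈ 𝓝 x, (U ∩ S).Finite) : DiscreteTopology S := by
  rw [discreteTopology_iff_isOpen_singleton]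
  rintro ⟨x, hx⟩
  obtain ⟨U, hU, hfin⟩ := h x hx
  refine isOpen_singleton_of_finite_mem_nhds _ (continuous_subtype_val.continuousAt hU) ?_
  exact (hfin.preimage Subtype.val_injective.injOn).subset fun y hy => ⟨hy, y.2⟩

theorem conj_eq_pow_pred {m : ℕ} (hm : m ≠ 0) {z : ℂ} (hz : z ^ m = 1) :
    conj z = z ^ (m - 1) := by
  rw [← inv_eq_conj (norm_eq_one_of_pow_eq_one hz hm)]
  exact inv_eq_of_mul_eq_one_right (by rw [mul_pow_sub_one hm, hz])

theorem normSq_eq_of_mul_conj_eq {a b c d w : ℂ}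
    (h : a * conj a - 1 = w * (c * conj c) ∧ b * conj b = w * (d * conj d - 1))
    (hw : w.im = 0) :
    normSq a = 1 + w.re * normSq c ∧ normSq b = w.re * (normSq d - 1) := by
  rw [show w = (w.re : ℂ) from Complex.ext rfl (by simp [hw])] at h
  simp only [mul_conj] at h
  obtain ⟨h1, h2⟩ := h
  constructor
  · exact_mod_cast (by linear_combination h1 : (normSq a : ℂ) = 1 + w.re * normSq c)
  · exact_mod_cast h2

theorem norm_le_one_and_sq_norm_lt_of_normSq_eq {a c : ℂ} {v : ℝ} (hv : v < 0)
    (h : normSq a = 1 + v * normSq c) (ha : a ≠ 0) : ‖a‖ ≤ 1 ∧ ‖c‖ ^ 2 < (-v)⁻¹ := by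
  rw [normSq_eq_norm_sq, normSq_eq_norm_sq] at h
  have hc : 0 ≤ ‖c‖ ^ 2 := by positivity
  have ha' : 0 < ‖a‖ := norm_pos_iff.mpr ha
  constructor
  · nlinarith
  · rw [← one_div, lt_div_iff₀ (neg_pos.mpr hv)]
    nlinarith

theorem norm_le_one_add_normSq (z : ℂ) : ‖z‖ ≤ 1 + normSq z := by
  rw [normSq_eq_norm_sq]
  nlinarith [sq_nonneg (‖z‖ - 1)]

theorem norm_le_of_normSq_eq {a b c d : ℂ} {v : ℝ} (hv : v < 0)
    (h : normSq a = 1 + v * normSq c ∧ normSq b = v * (normSq d - 1)) :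
    ‖a‖ ≤ 2 - v - v⁻¹ ∧ ‖b‖ ≤ 2 - v - v⁻¹ ∧ ‖c‖ ≤ 2 - v - v⁻¹ ∧ ‖d‖ ≤ 2 - v - v⁻¹ := by
  obtain ⟨hac, hbd⟩ := h
  have hv' : 0 < -v⁻¹ := neg_pos.mpr (inv_lt_zero.mpr hv)
  have := normSq_nonneg a
  have := normSq_nonneg b
  have := normSq_nonneg c
  have := normSq_nonneg d
  have hc : normSq c ≤ -v⁻¹ := by
    rw [neg_inv, ← one_div, le_div_iff₀ (neg_pos.mpr hv)]
    linarith
  refine ⟨?_, ?_, ?_, ?_⟩ <;> refine (norm_le_one_add_normSq _).trans ?_ <;> nlinarith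

def PreservesForm (w : ℂ) (A : Matrix (Fin 2) (Fin 2) ℂ) : Prop :=
  Matrix.diagonal ![-1, w] = A.transpose * Matrix.diagonal ![-1, w] * A.map conj

theorem PreservesForm.entries {a b c d w : ℂ} (h : PreservesForm w !![a, b; c, d]) :
    a * conj a - 1 = w * (c * conj c) ∧ b * conj b = w * (d * conj d - 1) := by
  have h00 : -1 = -(a * conj a) + c * w * conj c := by
    simpa [Matrix.mul_apply, Fin.sum_univ_two] using congrFun (congrFun h 0) 0
  have h11 : w = -(b * conj b) + d * w * conj d := by
    simpa [Matrix.mul_apply, Fin.sum_univ_two] using congrFun (congrFun h 1) 1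
  constructor
  · linear_combination h00
  · linear_combination h11

theorem PreservesForm.one_le_norm {a b c d w : ℂ} (h : PreservesForm w !![a, b; c, d])
    (hw : w.im = 0) (hw' : 0 < w.re) : 1 ≤ ‖a‖ := by
  have := (normSq_eq_of_mul_conj_eq h.entries hw).1
  rw [normSq_eq_norm_sq, normSq_eq_norm_sq] at this
  nlinarith [sq_nonneg ‖c‖, norm_nonneg a]

section Adjoin

variable {ζ : ℂ}

theorem RingHom.ext_adjoin_singleton {S : Type*} [Ring S] {f g : ℤ[ζ] →+* S}
    (h : f ζ = g ζ) : f = g := by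
  have := AlgHom.adjoin_ext (φ₁ := f.toIntAlgHom) (φ₂ := g.toIntAlgHom) (by rintro x rfl; exact h)
  ext x
  exact DFunLike.congr_fun this x

theorem conj_mem_adjoin {m : ℕ} (hm : m ≠ 0) (hζ : ζ ^ m = 1) {x : ℂ} (hx : x ∈ ℤ[ζ]) :
    conj x ∈ ℤ[ζ] := by
  suffices ℤ[ζ] ≤ ℤ[ζ].comap (starRingEnd ℂ).toIntAlgHom from this hx
  refine Algebra.adjoin_singleton_le ?_
  change conj ζ ∈ ℤ[ζ]
  rw [conj_eq_pow_pred hm hζ]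
  exact pow_mem (Algebra.self_mem_adjoin_singleton ℤ ζ) _

def adjoinConj {m : ℕ} (hm : m ≠ 0) (hζ : ζ ^ m = 1) : ℤ[ζ] →+* ℤ[ζ] :=
  ((starRingEnd ℂ).comp ℤ[ζ].val.toRingHom).codRestrict _ fun x => conj_mem_adjoin hm hζ x.2

@[simp]
theorem coe_adjoinConj {m : ℕ} (hm : m ≠ 0) (hζ : ζ ^ m = 1) (x : ℤ[ζ]) :
    (adjoinConj hm hζ x : ℂ) = conj (x : ℂ) :=
  rfl

theorem map_adjoinConj {m : ℕ} (hm : m ≠ 0) (hζ : ζ ^ m = 1) (σ : ℤ[ζ] →+* ℂ) (x : ℤ[ζ]) :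
    σ (adjoinConj hm hζ x) = conj (σ x) := by
  have hσ : σ ζ ^ m = 1 := by
    rw [← map_pow, show (ζ : ℤ[ζ]) ^ m = 1 from Subtype.ext hζ, map_one]
  have hgen : adjoinConj hm hζ ζ = (ζ : ℤ[ζ]) ^ (m - 1) := Subtype.ext (conj_eq_pow_pred hm hζ)
  have : σ.comp (adjoinConj hm hζ) = (starRingEnd ℂ).comp σ := by
    refine RingHom.ext_adjoin_singleton ?_
    simp [hgen, conj_eq_pow_pred hm hσ, ← map_pow]
  exact DFunLike.congr_fun this x

theorem norm_map_eq_of_map_eq_or_conj (σ : ℤ[ζ] →+* ℂ) (hσ : σ ζ = ζ ∨ σ ζ = conj ζ)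
    (x : ℤ[ζ]) : ‖σ x‖ = ‖(x : ℂ)‖ := by
  rcases hσ with hσ | hσ
  · rw [RingHom.ext_adjoin_singleton (g := ℤ[ζ].val.toRingHom) hσ]
    rfl
  · rw [RingHom.ext_adjoin_singleton (g := (starRingEnd ℂ).comp ℤ[ζ].val.toRingHom) hσ]
    exact RCLike.norm_conj _

/-- `q(ζ)` need not lie in `ℤ[ζ]`; an integer multiple of `q` has integral coefficients. -/
theorem map_eq_aeval_mul (σ : ℤ[ζ] →+* ℂ) (q : ℚ[X]) {x y : ℤ[ζ]}
    (h : (x : ℂ) = aeval ζ q * y) : σ x = aeval (σ ζ) q * σ y := by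
  obtain ⟨n, hn, hp⟩ := IsLocalization.integerNormalization_spec (nonZeroDivisors ℤ) q
  set p := IsLocalization.integerNormalization (nonZeroDivisors ℤ) q
  have hpq (z : ℂ) : aeval z p = n * aeval z q := by
    rw [← aeval_map_algebraMap ℚ, hp, map_zsmul, zsmul_eq_mul]
  have hR : n • x = aeval (ζ : ℤ[ζ]) p * y := Subtype.ext <| by
    simp [aeval_subalgebra_coe, hpq, h, mul_assoc]
  have := congrArg σ hR
  rw [map_zsmul, map_mul, show σ (aeval (ζ : ℤ[ζ]) p) = _ from
    (aeval_algHom_apply σ.toIntAlgHom _ p).symm, hpq, zsmul_eq_mul, mul_assoc] at this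
  exact mul_left_cancel₀ (Int.cast_ne_zero.mpr (nonZeroDivisors.ne_zero hn)) this

theorem finite_setOf_forall_norm_map_le (hζ : IsIntegral ℤ ζ) (B : ℝ) :
    {x : ℤ[ζ] | ∀ σ : ℤ[ζ] →+* ℂ, ‖σ x‖ ≤ B}.Finite := by
  let K := IntermediateField.adjoin ℚ {ζ}
  have : FiniteDimensional ℚ K := IntermediateField.adjoin.finiteDimensional hζ.tower_top
  have : NumberField K := ⟨⟩
  have := Algebra.IsIntegral.adjoin_singleton hζ
  have hle : ℤ[ζ] ≤ K.toSubalgebra.restrictScalars ℤ :=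
    Algebra.adjoin_singleton_le (IntermediateField.mem_adjoin_simple_self ℚ ζ)
  let ι : ℤ[ζ] →+* K := ℤ[ζ].val.toRingHom.codRestrict K fun x => hle x.2
  have hι : Function.Injective ι := fun x y h => Subtype.ext (congrArg (fun z : K => (z : ℂ)) h)
  refine ((NumberField.Embeddings.finite_of_norm_le K ℂ B).preimage hι.injOn).subset ?_
  intro x hx
  exact ⟨(Algebra.IsIntegral.isIntegral x).map ι.toIntAlgHom, fun φ => hx (φ.comp ι)⟩

theorem PreservesForm.map_entries {m : ℕ} (hm : m ≠ 0) (hζ : ζ ^ m = 1) {q : ℚ[X]}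
    {a b c d : ℤ[ζ]} (h : PreservesForm (aeval ζ q) !![(a : ℂ), b; c, d]) (σ : ℤ[ζ] →+* ℂ) :
    σ a * conj (σ a) - 1 = aeval (σ ζ) q * (σ c * conj (σ c)) ∧
      σ b * conj (σ b) = aeval (σ ζ) q * (σ d * conj (σ d) - 1) := by
  obtain ⟨hac, hbd⟩ := h.entries
  set τ := adjoinConj hm hζ
  constructor
  · have := map_eq_aeval_mul σ q (x := a * τ a - 1) (y := c * τ c) (by simpa [τ] using hac)
    simpa [τ, map_adjoinConj] using this
  · have := map_eq_aeval_mul σ q (x := b * τ b) (y := d * τ d - 1) (by simpa [τ] using hbd)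
    simpa [τ, map_adjoinConj] using this

theorem PreservesForm.norm_map_le_one_and_sq_norm_lt {m : ℕ} (hm : m ≠ 0)
    (hζ : IsPrimitiveRoot ζ m) {q : ℚ[X]} {a b c d : ℤ[ζ]}
    (h : PreservesForm (aeval ζ q) !![(a : ℂ), b; c, d]) (ha : (a : ℂ) ≠ 0) (σ : ℤ[ζ] →+* ℂ)
    (him : (aeval (σ ζ) q).im = 0) (hneg : (aeval (σ ζ) q).re < 0) :
    ‖σ a‖ ≤ 1 ∧ ‖σ c‖ ^ 2 < (-(aeval (σ ζ) q).re)⁻¹ := by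
  have := Algebra.IsIntegral.adjoin_singleton (hζ.isIntegral (Nat.pos_of_ne_zero hm))
  have hσa : σ a ≠ 0 := by
    rw [map_ne_zero_iff σ σ.injective_of_isIntegral_int]
    exact fun h0 => ha (congrArg Subtype.val h0)
  exact norm_le_one_and_sq_norm_lt_of_normSq_eq hneg
    (normSq_eq_of_mul_conj_eq (h.map_entries hm hζ.pow_eq_one σ) him).1 hσa

theorem PreservesForm.norm_map_le {m : ℕ} (hm : m ≠ 0) (hζ : IsPrimitiveRoot ζ m)
    {q : ℚ[X]} (hq : ∀ ξ : ℂ, IsPrimitiveRoot ξ m → ξ ≠ ζ → ξ ≠ conj ζ →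
      (aeval ξ q).im = 0 ∧ (aeval ξ q).re < 0)
    {a b c d : ℤ[ζ]} (h : PreservesForm (aeval ζ q) !![(a : ℂ), b; c, d]) (σ : ℤ[ζ] →+* ℂ)
    {B : ℝ} (hB : ‖(a : ℂ)‖ ≤ B ∧ ‖(b : ℂ)‖ ≤ B ∧ ‖(c : ℂ)‖ ≤ B ∧ ‖(d : ℂ)‖ ≤ B)
    (hB' : ∀ ξ ∈ primitiveRoots m ℂ, 2 - (aeval ξ q).re - (aeval ξ q).re⁻¹ ≤ B) :
    ‖σ a‖ ≤ B ∧ ‖σ b‖ ≤ B ∧ ‖σ c‖ ≤ B ∧ ‖σ d‖ ≤ B := by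
  by_cases hσ : σ ζ = ζ ∨ σ ζ = conj ζ
  · simpa only [norm_map_eq_of_map_eq_or_conj σ hσ] using hB
  obtain ⟨hσζ, hσζ'⟩ := not_or.mp hσ
  have := Algebra.IsIntegral.adjoin_singleton (hζ.isIntegral (Nat.pos_of_ne_zero hm))
  have hξ : IsPrimitiveRoot (σ ζ) m :=
    (hζ.of_map_of_injective (f := ℤ[ζ].val) Subtype.val_injective).map_of_injective
      σ.injective_of_isIntegral_int
  obtain ⟨him, hneg⟩ := hq _ hξ hσζ hσζ'
  have hT := hB' _ ((mem_primitiveRoots (Nat.pos_of_ne_zero hm)).mpr hξ)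
  obtain ⟨ha, hb, hc, hd⟩ :=
    norm_le_of_normSq_eq hneg (normSq_eq_of_mul_conj_eq (h.map_entries hm hζ.pow_eq_one σ) him)
  exact ⟨ha.trans hT, hb.trans hT, hc.trans hT, hd.trans hT⟩

theorem discreteTopology_setOf_preservesForm {m : ℕ} (hm : m ≠ 0) (hζ : IsPrimitiveRoot ζ m)
    {q : ℚ[X]} (hq : ∀ ξ : ℂ, IsPrimitiveRoot ξ m → ξ ≠ ζ → ξ ≠ conj ζ →
      (aeval ξ q).im = 0 ∧ (aeval ξ q).re < 0) :
    DiscreteTopology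
      {A : Matrix (Fin 2) (Fin 2) ℂ | (∀ i j, A i j ∈ ℤ[ζ]) ∧ PreservesForm (aeval ζ q) A} := by
  refine discreteTopology_of_finite_inter_nhds fun A₀ _ => ?_
  obtain ⟨C, hC⟩ := Finite.exists_le fun p : Fin 2 × Fin 2 => ‖A₀ p.1 p.2‖
  obtain ⟨M, hM⟩ :=
    ((primitiveRoots m ℂ).image fun ξ => 2 - (aeval ξ q).re - (aeval ξ q).re⁻¹).exists_le
  set B := max (C + 1) M
  have hF := (finite_setOf_forall_norm_map_le (hζ.isIntegral (Nat.pos_of_ne_zero hm)) B).image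
    Subtype.val
  refine ⟨{A | ∀ i j, ‖A i j‖ < C + 1}, ?_,
    (Set.Finite.pi' fun _ => Set.Finite.pi' fun _ => hF).subset ?_⟩
  · refine IsOpen.mem_nhds ?_ fun i j => (hC (i, j)).trans_lt (lt_add_one C)
    simp only [Set.ofPred_forall]
    exact isOpen_iInter_of_finite fun i => isOpen_iInter_of_finite fun j =>
      isOpen_lt (by fun_prop) continuous_const
  · rintro A ⟨hAC, hAR, hA⟩
    rw [Matrix.eta_fin_two A] at hA
    have hAB (i j) : ‖A i j‖ ≤ B := (hAC i j).le.trans (le_max_left _ _)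
    have hMB (ξ) (hξ : ξ ∈ primitiveRoots m ℂ) : 2 - (aeval ξ q).re - (aeval ξ q).re⁻¹ ≤ B :=
      (hM _ (Finset.mem_image_of_mem _ hξ)).trans (le_max_right _ _)
    intro i j
    refine ⟨⟨A i j, hAR i j⟩, fun σ => ?_, rfl⟩
    have := PreservesForm.norm_map_le (a := ⟨A 0 0, hAR 0 0⟩) (b := ⟨A 0 1, hAR 0 1⟩)
      (c := ⟨A 1 0, hAR 1 0⟩) (d := ⟨A 1 1, hAR 1 1⟩) hm hζ hq hA σ
      ⟨hAB 0 0, hAB 0 1, hAB 1 0, hAB 1 1⟩ hMB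
    fin_cases i <;> fin_cases j
    exacts [this.1, this.2.1, this.2.2.1, this.2.2.2]

end Adjoin

/-- For the unitary group `Γ` of the hermitian form `diag(-1, w)` over `ℤ[ζ]` (with
`w(ζ) > 0` and `w(ξ) < 0` for the other primitive `m`-th roots of unity `ξ`), every
`A = [[a,b],[c,d]] ∈ Γ` satisfies `|a(ζ)| ≥ 1`, and `|a(ξ)| ≤ 1`,
`|c(ξ)|² < (-w(ξ))⁻¹` for the Galois conjugates at `ξ ∉ {ζ, ζ̄}`; consequently `Γ` is a
discrete subgroup of `GL(2, ℂ)`. -/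
theorem stmt_19 (m : ℕ) (hm : 3 ≤ m)
    (ζ : ℂ) (hζ : ζ = Complex.exp (2 * Real.pi * Complex.I / (m : ℂ)))
    (R : Subalgebra ℤ ℂ) (hR : R = Algebra.adjoin ℤ {ζ}) (hζR : ζ ∈ R)
    (q : Polynomial ℚ) (w : ℂ) (hw : w = Polynomial.aeval ζ q)
    (hwreal : w.im = 0) (hwpos : 0 < w.re)
    (hwneg : ∀ ξ : ℂ, IsPrimitiveRoot ξ m → ξ ≠ ζ → ξ ≠ (starRingEnd ℂ) ζ →
      (Polynomial.aeval ξ q).im = 0 ∧ (Polynomial.aeval ξ q).re < 0)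
    (Γ : Set (Matrix (Fin 2) (Fin 2) ℂ))
    (hΓ : Γ = {A | (∀ i j, A i j ∈ R) ∧
      (∃ B : Matrix (Fin 2) (Fin 2) ℂ, (∀ i j, B i j ∈ R) ∧ A * B = 1 ∧ B * A = 1) ∧
      Matrix.diagonal ![(-1 : ℂ), w]
        = A.transpose * Matrix.diagonal ![(-1 : ℂ), w] * A.map (starRingEnd ℂ)}) :
    (∀ a b c d : R,
      !![(a : ℂ), (b : ℂ); (c : ℂ), (d : ℂ)] ∈ Γ →
        1 ≤ ‖(a : ℂ)‖ ∧
        ∀ ξ : ℂ, IsPrimitiveRoot ξ m → ξ ≠ ζ → ξ ≠ (starRingEnd ℂ) ζ →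
          ∀ σ : R →+* ℂ, σ ⟨ζ, hζR⟩ = ξ →
            ‖σ a‖ ≤ 1 ∧
            ‖σ c‖ ^ 2 < (-(Polynomial.aeval ξ q).re)⁻¹) ∧
    DiscreteTopology ↥Γ := by
  subst hR hw hΓ
  have hm0 : m ≠ 0 := by omega
  have hprim : IsPrimitiveRoot ζ m := hζ ▸ Complex.isPrimitiveRoot_exp m hm0
  refine ⟨fun a b c d hA => ?_, ?_⟩
  · have ha : 1 ≤ ‖(a : ℂ)‖ := PreservesForm.one_le_norm hA.2.2 hwreal hwpos
    refine ⟨ha, fun ξ hξ hξζ hξζ' σ hσ => ?_⟩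
    subst hσ
    obtain ⟨him, hneg⟩ := hwneg _ hξ hξζ hξζ'
    exact PreservesForm.norm_map_le_one_and_sq_norm_lt hm0 hprim hA.2.2
      (norm_pos_iff.mp (zero_lt_one.trans_le ha)) σ him hneg
  · exact (discreteTopology_setOf_preservesForm hm0 hprim hwneg).of_subset
      fun A hA => ⟨hA.1, hA.2.2⟩
end
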